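/- arXiv:2204.08740 — 9 statements merged into one kernel-verified Lean document; each statement's English description precedes it below -/
import Mathlib

section
/- A finite strategic game is weakly acyclic if and only if it has a weak potential. -/
/-- A joint strategy is a Nash equilibrium if no player can profit by a unilateral deviation. -/
def NashEq {n : ℕ} (S : Fin n → Type) (p : ∀ _ : Fin n, (∀ j, S j) → ℝ) (s : ∀ j, S j) : Prop :=
  ∀ (i : Fin n) (ti : S i), p i s ≥ p i (Function.update s i ti)

/-- `(s, s')` is a profitable deviation: some player `i` changes only his own strategy
and strictly increases his payoff. -/
def ProfDev {n : ℕ} (S : Fin n → Type) (p : ∀ _ : Fin n, (∀ j, S j) → ℝ)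
    (s s' : ∀ j, S j) : Prop :=
  ∃ i : Fin n, (∀ j, j ≠ i → s' j = s j) ∧ p i s' > p i s

/-- `P` is a weak potential: from every joint strategy that is not a Nash equilibrium
there is a profitable deviation strictly increasing `P`. -/
def WeakPotential {n : ℕ} (S : Fin n → Type) (p : ∀ _ : Fin n, (∀ j, S j) → ℝ)
    (P : (∀ j, S j) → ℝ) : Prop :=
  ∀ s, ¬ NashEq S p s → ∃ s', ProfDev S p s s' ∧ P s < P s'

lemma nash_iff_no_dev {n : ℕ} (S : Fin n → Type) (p : ∀ _ : Fin n, (∀ j, S j) → ℝ)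
    (s : ∀ j, S j) : NashEq S p s ↔ ¬ ∃ t, ProfDev S p s t := by
  constructor
  · rintro h ⟨t, i, hoff, hgt⟩
    have ht : t = Function.update s i (t i) := by
      funext j
      by_cases hj : j = i
      · subst hj; simp
      · rw [Function.update_of_ne hj]; exact hoff j hj
    have := h i (t i)
    rw [← ht] at this
    exact absurd hgt (not_lt.mpr this)
  · intro h i ti
    by_contra hlt
    push_neg at hlt
    exact h ⟨Function.update s i ti, i, fun j hj => Function.update_of_ne hj _ _, hlt⟩

/-- If there is an improvement path of length `k` from a non-Nash `s`, then `k ≥ 1`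
and there is a profitable deviation to some `s'` with a path of length `k - 1`. -/
lemma good_step {n : ℕ} (S : Fin n → Type) (p : ∀ _ : Fin n, (∀ j, S j) → ℝ)
    (s : ∀ j, S j) (k : ℕ)
    (hgood : ∃ f : Fin (k + 1) → ∀ j, S j,
      f 0 = s ∧ (∀ m : Fin k, ProfDev S p (f m.castSucc) (f m.succ)) ∧
      ¬ ∃ t, ProfDev S p (f (Fin.last k)) t)
    (hns : ¬ NashEq S p s) :
    ∃ (k' : ℕ) (s' : ∀ j, S j), k = k' + 1 ∧ ProfDev S p s s' ∧
      ∃ g : Fin (k' + 1) → ∀ j, S j,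
        g 0 = s' ∧ (∀ m : Fin k', ProfDev S p (g m.castSucc) (g m.succ)) ∧
        ¬ ∃ t, ProfDev S p (g (Fin.last k')) t := by
  obtain ⟨f, hf0, hstep, hlast⟩ := hgood
  match k, f, hf0, hstep, hlast with
  | 0, f, hf0, hstep, hlast =>
    exfalso
    apply hns
    rw [nash_iff_no_dev]
    have : f (Fin.last 0) = s := by rw [show (Fin.last 0) = 0 from rfl, hf0]
    rwa [this] at hlast
  | (k' + 1), f, hf0, hstep, hlast =>
    refine ⟨k', f 1, rfl, ?_, fun i => f i.succ, rfl, ?_, ?_⟩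
    · have := hstep 0
      rw [Fin.castSucc_zero, hf0, Fin.succ_zero_eq_one] at this
      exact this
    · intro m
      have := hstep m.succ
      show ProfDev S p (f m.castSucc.succ) (f m.succ.succ)
      rwa [Fin.succ_castSucc]
    · show ¬ ∃ t, ProfDev S p (f (Fin.last k').succ) t
      exact hlast

/-- A finite strategic game is weakly acyclic (from every joint strategy there is a finite
improvement path, i.e. a finite sequence of profitable deviations ending in a joint strategy
admitting no profitable deviation) iff it has a weak potential. -/
theorem weakly_acyclic_iff_weak_potential {n : ℕ} (S : Fin n → Type)
    [∀ i, Fintype (S i)] [∀ i, Nonempty (S i)]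
    (p : ∀ _ : Fin n, (∀ j, S j) → ℝ) :
    (∀ s : ∀ j, S j, ∃ (k : ℕ) (f : Fin (k + 1) → ∀ j, S j),
        f 0 = s ∧ (∀ m : Fin k, ProfDev S p (f m.castSucc) (f m.succ)) ∧
        ¬ ∃ t, ProfDev S p (f (Fin.last k)) t) ↔
    ∃ P : (∀ j, S j) → ℝ, WeakPotential S p P := by
  classical
  constructor
  · intro hwa
    set good : (∀ j, S j) → ℕ → Prop := fun s k => ∃ f : Fin (k + 1) → ∀ j, S j,
      f 0 = s ∧ (∀ m : Fin k, ProfDev S p (f m.castSucc) (f m.succ)) ∧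
      ¬ ∃ t, ProfDev S p (f (Fin.last k)) t with hgood_def
    have hne : ∀ s, {k | good s k}.Nonempty := by
      intro s
      obtain ⟨k, f, h1, h2, h3⟩ := hwa s
      exact ⟨k, f, h1, h2, h3⟩
    refine ⟨fun s => -((sInf {k | good s k} : ℕ) : ℝ), ?_⟩
    intro s hns
    have hmem : good s (sInf {k | good s k}) := Nat.sInf_mem (hne s)
    obtain ⟨k', s', hk, hdev, hg⟩ := good_step S p s _ hmem hns
    have hle : sInf {k | good s' k} ≤ k' := Nat.sInf_le hg
    refine ⟨s', hdev, ?_⟩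
    show -((sInf {k | good s k} : ℕ) : ℝ) < -((sInf {k | good s' k} : ℕ) : ℝ)
    have h1 : ((sInf {k | good s' k} : ℕ) : ℝ) ≤ (k' : ℝ) := by exact_mod_cast hle
    have h2 : ((sInf {k | good s k} : ℕ) : ℝ) = (k' : ℝ) + 1 := by exact_mod_cast hk
    linarith
  · rintro ⟨P, hP⟩ s
    have key : ∀ N : ℕ, ∀ s : ∀ j, S j, Fintype.card {t : ∀ j, S j // P s < P t} ≤ N →
        ∃ (k : ℕ) (f : Fin (k + 1) → ∀ j, S j),
        f 0 = s ∧ (∀ m : Fin k, ProfDev S p (f m.castSucc) (f m.succ)) ∧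
        ¬ ∃ t, ProfDev S p (f (Fin.last k)) t := by
      intro N
      induction N with
      | zero =>
        intro s hcard
        by_cases hnash : NashEq S p s
        · exact ⟨0, fun _ => s, rfl, fun m => m.elim0,
            (nash_iff_no_dev S p s).mp hnash⟩
        · obtain ⟨s', _, hlt⟩ := hP s hnash
          have : 0 < Fintype.card {t : ∀ j, S j // P s < P t} :=
            Fintype.card_pos_iff.mpr ⟨⟨s', hlt⟩⟩
          omega
      | succ N ih =>
        intro s hcard
        by_cases hnash : NashEq S p s
        · exact ⟨0, fun _ => s, rfl, fun m => m.elim0,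
            (nash_iff_no_dev S p s).mp hnash⟩
        · obtain ⟨s', hdev, hlt⟩ := hP s hnash
          have hinj : Function.Injective
              (fun x : {t : ∀ j, S j // P s' < P t} =>
                (⟨x.1, lt_trans hlt x.2⟩ : {t : ∀ j, S j // P s < P t})) := by
            intro a b hab
            simp only [Subtype.mk.injEq] at hab
            exact Subtype.ext hab
          have hnotmem : (⟨s', hlt⟩ : {t : ∀ j, S j // P s < P t}) ∉
              Set.range (fun x : {t : ∀ j, S j // P s' < P t} =>
                (⟨x.1, lt_trans hlt x.2⟩ : {t : ∀ j, S j // P s < P t})) := by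
            rintro ⟨x, hx⟩
            have h1 : x.1 = s' := congrArg Subtype.val hx
            have h2 := x.2
            rw [h1] at h2
            exact lt_irrefl _ h2
          have hlt_card : Fintype.card {t : ∀ j, S j // P s' < P t} <
              Fintype.card {t : ∀ j, S j // P s < P t} :=
            Fintype.card_lt_of_injective_of_notMem _ hinj hnotmem
          obtain ⟨k, f, hf0, hstep, hlast⟩ := ih s' (by omega)
          refine ⟨k + 1, Fin.cons s f, Fin.cons_zero _ _, ?_, ?_⟩
          · intro m
            refine Fin.cases ?_ ?_ m
            · have h0 : (Fin.cons s f : Fin (k + 2) → ∀ j, S j) (0 : Fin (k + 1)).castSucc = s := by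
                rw [Fin.castSucc_zero]; exact Fin.cons_zero _ _
              have h1 : (Fin.cons s f : Fin (k + 2) → ∀ j, S j) (0 : Fin (k + 1)).succ = s' := by
                rw [Fin.succ_zero_eq_one, show (1 : Fin (k + 2)) = (0 : Fin (k+1)).succ from rfl,
                  Fin.cons_succ, hf0]
              rw [h0, h1]; exact hdev
            · intro i
              have h0 : (Fin.cons s f : Fin (k + 2) → ∀ j, S j) i.succ.castSucc = f i.castSucc := by
                rw [← Fin.succ_castSucc, Fin.cons_succ]
              have h1 : (Fin.cons s f : Fin (k + 2) → ∀ j, S j) i.succ.succ = f i.succ := by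
                rw [Fin.cons_succ]
              rw [h0, h1]; exact hstep i
          · have : (Fin.cons s f : Fin (k + 2) → ∀ j, S j) (Fin.last (k + 1)) = f (Fin.last k) := by
              rw [show Fin.last (k + 1) = (Fin.last k).succ from rfl, Fin.cons_succ]
            rw [this]; exact hlast
    exact key _ s le_rfl
end

section
/- Let H = (S_1,…,S_n, p_1,…,p_n) be a finite strategic game and let H^k = (S^k_1,…,S^k_n, p_1,…,p_n) be obtained from H by k ≥ 1 rounds of iterated elimination of weakly dominated strategies (at each round some, not necessarily all, weakly dominated strategies are removed). Then for every player i and every strategy s_i ∈ S_i there exists t_i ∈ S^k_i such that p_i(t_i, s_{-i}) ≥ p_i(s_i, s_{-i}) for all s_{-i} ∈ S^k_{-i}. -/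
/-- `t` weakly dominates `s` (strategies of player `i`) in the game restricted to the
strategy sets `A j`: `t` is at least as good against every joint strategy of the
opponents drawn from `A`, and strictly better against at least one. -/
def WDomIn {n : ℕ} (S : Fin n → Type) [DecidableEq (Fin n)]
    (p : ∀ _ : Fin n, (∀ j, S j) → ℝ) (A : ∀ j, Set (S j)) (i : Fin n) (t s : S i) : Prop :=
  (∀ σ : ∀ j, S j, (∀ j, j ≠ i → σ j ∈ A j) →
      p i (Function.update σ i t) ≥ p i (Function.update σ i s)) ∧
  (∃ σ : ∀ j, S j, (∀ j, j ≠ i → σ j ∈ A j) ∧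
      p i (Function.update σ i t) > p i (Function.update σ i s))

/-- `B` is obtained from `A` by one round of elimination of some (not necessarily all)
strategies that are weakly dominated in the game restricted to `A`. -/
def ElimStep {n : ℕ} (S : Fin n → Type) (p : ∀ _ : Fin n, (∀ j, S j) → ℝ)
    (A B : ∀ j, Set (S j)) : Prop :=
  (∀ j, B j ⊆ A j) ∧
  (∀ (j : Fin n), ∀ s ∈ A j, s ∉ B j → ∃ t ∈ A j, WDomIn S p A j t s)

/-- Lemma: if `H^k` is obtained from the finite game `H` by `k ≥ 1` rounds of iterated
elimination of weakly dominated strategies, then every strategy `sᵢ` of `H` is weakly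
"covered" in `H^k`: there is `tᵢ ∈ S^k_i` with `pᵢ(tᵢ, s₋ᵢ) ≥ pᵢ(sᵢ, s₋ᵢ)` for all
`s₋ᵢ ∈ S^k_{-i}`. -/
theorem exists_dominating_survivor {n : ℕ} (S : Fin n → Type)
    [∀ i, Fintype (S i)] [∀ i, Nonempty (S i)]
    (p : ∀ _ : Fin n, (∀ j, S j) → ℝ)
    (A : ℕ → ∀ j, Set (S j)) (hA0 : A 0 = fun _ => Set.univ)
    (k : ℕ) (hk : 1 ≤ k) (hstep : ∀ m < k, ElimStep S p (A m) (A (m + 1)))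
    (i : Fin n) (si : S i) :
    ∃ ti ∈ A k i, ∀ σ : ∀ j, S j, (∀ j, j ≠ i → σ j ∈ A k j) →
      p i (Function.update σ i ti) ≥ p i (Function.update σ i si) := by
  clear hk
  induction k with
  | zero =>
    refine ⟨si, ?_, fun σ _ => le_refl _⟩
    rw [hA0]; trivial
  | succ k ih =>
    obtain ⟨t, htA, htcov⟩ := ih (fun m hm => hstep m (Nat.lt_succ_of_lt hm))
    have hwf : WellFounded (fun u v : S i => WDomIn S p (A k) i u v) := by
      have h1 : IsTrans (S i) (fun u v => WDomIn S p (A k) i u v) := by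
        constructor
        rintro a b c ⟨hab, _⟩ ⟨hbc, σ, hσ, hlt⟩
        exact ⟨fun τ hτ => le_trans (hbc τ hτ) (hab τ hτ),
          σ, hσ, lt_of_lt_of_le hlt (hab σ hσ)⟩
      have h2 : IsIrrefl (S i) (fun u v => WDomIn S p (A k) i u v) := by
        constructor
        rintro a ⟨_, σ, _, hlt⟩
        exact lt_irrefl _ hlt
      exact Finite.wellFounded_of_trans_of_irrefl _
    obtain ⟨a, ⟨haA, hacov⟩, hmax⟩ := hwf.has_min
      {u : S i | u ∈ A k i ∧ ∀ σ : ∀ j, S j, (∀ j, j ≠ i → σ j ∈ A k j) →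
        p i (Function.update σ i u) ≥ p i (Function.update σ i si)}
      ⟨t, htA, htcov⟩
    have hstep' := hstep k (Nat.lt_succ_self k)
    by_cases hmem : a ∈ A (k + 1) i
    · exact ⟨a, hmem, fun σ hσ => hacov σ (fun j hj => hstep'.1 j (hσ j hj))⟩
    · exfalso
      obtain ⟨w, hwA, hwdom⟩ := hstep'.2 i a haA hmem
      exact hmax w ⟨hwA, fun σ hσ => le_trans (hacov σ hσ) (hwdom.1 σ hσ)⟩ hwdom
end

section
/- Consider a strictly competitive two-player strategic game H with a Nash equilibrium s. Suppose that for some player i ∈ {1,2} the strategy t_i weakly dominates s_i in H. Then (t_i, s_{-i}) is also a Nash equilibrium of H. -/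
/-- A two-player strategic game `(p1, p2)` is strictly competitive. -/
def StrictlyCompetitive {S1 S2 : Type} (p1 p2 : S1 → S2 → ℝ) : Prop :=
  ∀ (a : S1) (b : S2) (a' : S1) (b' : S2),
    (p1 a b ≥ p1 a' b' ↔ p2 a b ≤ p2 a' b') ∧
    (p2 a b ≥ p2 a' b' ↔ p1 a b ≤ p1 a' b')

/-- `(a, b)` is a Nash equilibrium of the two-player game `(p1, p2)`. -/
def NashEq2 {S1 S2 : Type} (p1 p2 : S1 → S2 → ℝ) (a : S1) (b : S2) : Prop :=
  (∀ a' : S1, p1 a b ≥ p1 a' b) ∧ (∀ b' : S2, p2 a b ≥ p2 a b')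

/-- In a strictly competitive game with Nash equilibrium `s = (a, b)`, if for some player `i`
the strategy `t_i` weakly dominates `s_i`, then `(t_i, s_{-i})` is also a Nash equilibrium.
(The two conjuncts treat the cases `i = 1` and `i = 2`.) -/
theorem nashEq_of_weaklyDominates {S1 S2 : Type} [Nonempty S1] [Nonempty S2]
    (p1 p2 : S1 → S2 → ℝ) (hsc : StrictlyCompetitive p1 p2)
    (a : S1) (b : S2) (hNE : NashEq2 p1 p2 a b) :
    (∀ t : S1, ((∀ y, p1 t y ≥ p1 a y) ∧ ∃ y, p1 t y > p1 a y) → NashEq2 p1 p2 t b) ∧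
    (∀ t : S2, ((∀ x, p2 x t ≥ p2 x b) ∧ ∃ x, p2 x t > p2 x b) → NashEq2 p1 p2 a t) := by
  obtain ⟨h1, h2⟩ := hNE
  constructor
  · rintro t ⟨hdom, -⟩
    have he1 : p1 t b = p1 a b := le_antisymm (h1 t) (hdom b)
    have he2 : p2 t b = p2 a b := by
      have := (hsc t b a b).1
      have := (hsc a b t b).1
      linarith [( (hsc t b a b).1.mp (ge_of_eq he1)), ((hsc a b t b).1.mp (ge_of_eq he1.symm))]
    constructor
    · intro a'
      calc p1 t b = p1 a b := he1
        _ ≥ p1 a' b := h1 a'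
    · intro b'
      have h3 : p2 t b' ≤ p2 a b' := (hsc t b' a b').1.mp (hdom b')
      calc p2 t b ≥ p2 a b' := he2 ▸ h2 b'
        _ ≥ p2 t b' := h3
  · rintro t ⟨hdom, -⟩
    have he2 : p2 a t = p2 a b := le_antisymm (h2 t) (hdom a)
    have he1 : p1 a t = p1 a b := by
      linarith [((hsc a t a b).2.mp (ge_of_eq he2)), ((hsc a b a t).2.mp (ge_of_eq he2.symm))]
    constructor
    · intro a'
      have h3 : p1 a' t ≤ p1 a' b := (hsc a' t a' b).2.mp (hdom a')
      calc p1 a t = p1 a b := he1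
        _ ≥ p1 a' b := h1 a'
        _ ≥ p1 a' t := h3
    · intro b'
      calc p2 a t = p2 a b := he2
        _ ≥ p2 a b' := h2 b'
end

section
/- (Minimax Theorem) Suppose s is a Nash equilibrium of a finite strictly competitive two-player strategic game H. Then each s_i is a security strategy for player i, and p(s) = (maxmin_1(H), maxmin_2(H)). -/
/-- `maxmin` for player 1: `max_{a} min_{b} p1 a b`. -/
noncomputable def maxmin1 {S1 S2 : Type} (p1 : S1 → S2 → ℝ) : ℝ :=
  sSup (Set.range fun a : S1 => sInf (Set.range fun b : S2 => p1 a b))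

/-- `maxmin` for player 2: `max_{b} min_{a} p2 a b`. -/
noncomputable def maxmin2 {S1 S2 : Type} (p2 : S1 → S2 → ℝ) : ℝ :=
  sSup (Set.range fun b : S2 => sInf (Set.range fun a : S1 => p2 a b))

/-- (Minimax theorem) If `s = (a, b)` is a Nash equilibrium of a finite strictly competitive
two-player game, then each `s_i` is a security strategy for player `i` and
`p(s) = (maxmin₁, maxmin₂)`. -/
theorem minimax {S1 S2 : Type} [Fintype S1] [Fintype S2] [Nonempty S1] [Nonempty S2]
    (p1 p2 : S1 → S2 → ℝ) (hsc : StrictlyCompetitive p1 p2)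
    (a : S1) (b : S2) (hNE : NashEq2 p1 p2 a b) :
    sInf (Set.range fun y : S2 => p1 a y) = maxmin1 p1 ∧
    sInf (Set.range fun x : S1 => p2 x b) = maxmin2 p2 ∧
    p1 a b = maxmin1 p1 ∧ p2 a b = maxmin2 p2 := by
  have hb' : ∀ b' : S2, p1 a b ≤ p1 a b' := fun b' => ((hsc a b a b').2).mp (hNE.2 b')
  have ha' : ∀ a' : S1, p2 a b ≤ p2 a' b := fun a' => ((hsc a b a' b).1).mp (hNE.1 a')
  have inf1 : sInf (Set.range fun y : S2 => p1 a y) = p1 a b := by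
    apply le_antisymm
    · exact csInf_le (Set.Finite.bddBelow (Set.finite_range _)) ⟨b, rfl⟩
    · exact le_csInf (Set.range_nonempty _) (by rintro _ ⟨y, rfl⟩; exact hb' y)
  have inf2 : sInf (Set.range fun x : S1 => p2 x b) = p2 a b := by
    apply le_antisymm
    · exact csInf_le (Set.Finite.bddBelow (Set.finite_range _)) ⟨a, rfl⟩
    · exact le_csInf (Set.range_nonempty _) (by rintro _ ⟨x, rfl⟩; exact ha' x)
  have m1 : maxmin1 p1 = p1 a b := by
    apply le_antisymm
    · apply csSup_le (Set.range_nonempty _)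
      rintro _ ⟨x, rfl⟩
      calc sInf (Set.range fun y : S2 => p1 x y)
          ≤ p1 x b := csInf_le (Set.Finite.bddBelow (Set.finite_range _)) ⟨b, rfl⟩
        _ ≤ p1 a b := hNE.1 x
    · exact le_csSup (Set.Finite.bddAbove (Set.finite_range _)) ⟨a, inf1⟩
  have m2 : maxmin2 p2 = p2 a b := by
    apply le_antisymm
    · apply csSup_le (Set.range_nonempty _)
      rintro _ ⟨y, rfl⟩
      calc sInf (Set.range fun x : S1 => p2 x y)
          ≤ p2 a y := csInf_le (Set.Finite.bddBelow (Set.finite_range _)) ⟨a, rfl⟩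
        _ ≤ p2 a b := hNE.2 y
    · exact le_csSup (Set.Finite.bddAbove (Set.finite_range _)) ⟨b, inf2⟩
  exact ⟨inf1.trans m1.symm, inf2.trans m2.symm, m1.symm, m2.symm⟩
end

section
/- Consider a strictly competitive two-player strategic game H that has a Nash equilibrium and has exactly two outcomes, and let H^1 be the game obtained by removing from H all weakly dominated strategies. Then H^1 is a trivial game, i.e., all joint strategies of H^1 yield the same outcome. -/
lemma key_val {S1 S2 : Type} (p1 p2 : S1 → S2 → ℝ) (hsc : StrictlyCompetitive p1 p2)
    (L M : ℝ) (hLM : L < M) (hvals : ∀ a b, p1 a b = L ∨ p1 a b = M)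
    (a0 : S1) (b0 : S2) (hN1 : ∀ a', p1 a0 b0 ≥ p1 a' b0) (hN2 : ∀ b', p2 a0 b0 ≥ p2 a0 b')
    {a : S1} (ha : ¬ ∃ t : S1, (∀ y, p1 t y ≥ p1 a y) ∧ ∃ y, p1 t y > p1 a y)
    {b : S2} (hb : ¬ ∃ t : S2, (∀ x, p2 x t ≥ p2 x b) ∧ ∃ x, p2 x t > p2 x b) :
    p1 a b = p1 a0 b0 := by
  rcases hvals a0 b0 with hv | hv
  · -- Nash value is L : every p1 x b0 = L, and any surviving b has p1 x b = L
    have hcol : ∀ x, p1 x b0 = L := by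
      intro x
      have := hN1 x
      rcases hvals x b0 with h | h
      · exact h
      · exfalso; rw [hv, h] at this; linarith
    have hbL : ∀ x, p1 x b = L := by
      intro x
      by_contra hx
      rcases hvals x b with h | h
      · exact hx h
      -- b0 weakly dominates b
      apply hb
      refine ⟨b0, ?_, ⟨x, ?_⟩⟩
      · intro x'
        have hiff := (hsc x' b0 x' b).2
        apply hiff.mpr
        rw [hcol x']
        rcases hvals x' b with h' | h' <;> rw [h'] <;> linarith
      · have hiff := (hsc x b x b0).2
        by_contra hcon
        push_neg at hcon
        have : p1 x b ≤ p1 x b0 := hiff.mp hcon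
        rw [h, hcol x] at this; linarith
    rw [hbL a, hv]
  · -- Nash value is M : every p1 a0 y = M, and any surviving a has p1 a y = M
    have hrow : ∀ y, p1 a0 y = M := by
      intro y
      have hiff := (hsc a0 b0 a0 y).2
      have := hiff.mp (hN2 y)
      rcases hvals a0 y with h | h
      · exfalso; rw [hv, h] at this; linarith
      · exact h
    have haM : ∀ y, p1 a y = M := by
      intro y
      by_contra hy
      rcases hvals a y with h | h
      swap
      · exact hy h
      apply ha
      refine ⟨a0, ?_, ⟨y, ?_⟩⟩
      · intro y'
        rw [hrow y']
        rcases hvals a y' with h' | h' <;> rw [h'] <;> linarith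
      · rw [hrow y, h]; linarith
    rw [haM b, hv]

/-- Lemma: if a strictly competitive two-player game has a Nash equilibrium and exactly two
outcomes, then the game `H¹` obtained by removing all weakly dominated strategies is trivial:
all of its joint strategies yield the same outcome. -/
theorem trivial_after_removing_dominated {S1 S2 : Type} [Nonempty S1] [Nonempty S2]
    (p1 p2 : S1 → S2 → ℝ) (hsc : StrictlyCompetitive p1 p2)
    (hNE : ∃ (a : S1) (b : S2), (∀ a', p1 a b ≥ p1 a' b) ∧ (∀ b', p2 a b ≥ p2 a b'))
    (htwo : Set.ncard {x : ℝ × ℝ | ∃ (a : S1) (b : S2), x = (p1 a b, p2 a b)} = 2) :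
    ∀ a ∈ {a : S1 | ¬ ∃ t : S1, (∀ y, p1 t y ≥ p1 a y) ∧ ∃ y, p1 t y > p1 a y},
    ∀ a' ∈ {a : S1 | ¬ ∃ t : S1, (∀ y, p1 t y ≥ p1 a y) ∧ ∃ y, p1 t y > p1 a y},
    ∀ b ∈ {b : S2 | ¬ ∃ t : S2, (∀ x, p2 x t ≥ p2 x b) ∧ ∃ x, p2 x t > p2 x b},
    ∀ b' ∈ {b : S2 | ¬ ∃ t : S2, (∀ x, p2 x t ≥ p2 x b) ∧ ∃ x, p2 x t > p2 x b},
      p1 a b = p1 a' b' ∧ p2 a b = p2 a' b' := by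
  -- p1-equality implies p2-equality
  have hpe : ∀ (x y : S1) (u v : S2), p1 x u = p1 y v → p2 x u = p2 y v := by
    intro x y u v h
    have h1 := ((hsc x u y v).1).mp h.ge
    have h2 := ((hsc x u y v).2).mpr h.le
    linarith
  obtain ⟨o1, o2, hne, hset⟩ := Set.ncard_eq_two.mp htwo
  have ho1 : o1 ∈ {x : ℝ × ℝ | ∃ (a : S1) (b : S2), x = (p1 a b, p2 a b)} := by
    rw [hset]; left; rfl
  have ho2 : o2 ∈ {x : ℝ × ℝ | ∃ (a : S1) (b : S2), x = (p1 a b, p2 a b)} := by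
    rw [hset]; right; rfl
  obtain ⟨a1, b1, h1⟩ := ho1
  obtain ⟨a2, b2, h2⟩ := ho2
  have hvals : ∀ x y, p1 x y = p1 a1 b1 ∨ p1 x y = p1 a2 b2 := by
    intro x y
    have hx : (p1 x y, p2 x y) ∈ {x : ℝ × ℝ | ∃ (a : S1) (b : S2), x = (p1 a b, p2 a b)} :=
      ⟨x, y, rfl⟩
    rw [hset] at hx
    rcases hx with hx | hx
    · left; rw [h1] at hx; exact (Prod.ext_iff.mp hx).1
    · right; rw [h2] at hx; exact (Prod.ext_iff.mp hx).1
  have hpne : p1 a1 b1 ≠ p1 a2 b2 := by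
    intro h
    apply hne
    rw [h1, h2, h, hpe a1 a2 b1 b2 h]
  obtain ⟨a0, b0, hN1, hN2⟩ := hNE
  have hkey : ∀ a ∈ {a : S1 | ¬ ∃ t : S1, (∀ y, p1 t y ≥ p1 a y) ∧ ∃ y, p1 t y > p1 a y},
      ∀ b ∈ {b : S2 | ¬ ∃ t : S2, (∀ x, p2 x t ≥ p2 x b) ∧ ∃ x, p2 x t > p2 x b},
      p1 a b = p1 a0 b0 := by
    intro a ha b hb
    rcases lt_or_gt_of_ne hpne with hlt | hlt
    · exact key_val p1 p2 hsc (p1 a1 b1) (p1 a2 b2) hlt hvals a0 b0 hN1 hN2 ha hb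
    · exact key_val p1 p2 hsc (p1 a2 b2) (p1 a1 b1) hlt
        (fun x y => (hvals x y).symm) a0 b0 hN1 hN2 ha hb
  intro a ha a' ha' b hb b' hb'
  have e1 := hkey a ha b hb
  have e2 := hkey a' ha' b' hb'
  have hp1 : p1 a b = p1 a' b' := by rw [e1, e2]
  exact ⟨hp1, hpe a a' b b' hp1⟩
end

section
/- (One deviation property) Let G be a finite extensive game with perfect information over the game tree T. A joint strategy s is a subgame perfect equilibrium in G if and only if for every non-leaf node u of T, writing i = turn(u), s_i(u) ∈ argmax_{x ∈ C(u)} o_i(leaf(s^x)), i.e., s_i(u) selects a child x of u for which o_i(leaf(s^x)) is maximal. -/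
/-- A finite extensive game with perfect information: a finite rooted tree whose
leaves carry an outcome for each player and whose internal nodes carry the player
to move and a nonempty finite family of children. -/
inductive ExtGame (ι : Type) : Type where
  | leaf : (ι → ℝ) → ExtGame ι
  | node : ι → (m : ℕ) → (Fin (m + 1) → ExtGame ι) → ExtGame ι

namespace ExtGame

variable {ι : Type}

/-- A strategy of player `i`: at every node where it is `i`'s turn, a choice of a child. -/
def Strategy (i : ι) : ExtGame ι → Type
  | .leaf _ => PUnit
  | .node j m children => (i = j → Fin (m + 1)) × ∀ c : Fin (m + 1), Strategy i (children c)

/-- The outcome (payoff vector) when every player follows his strategy. -/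
def outcome : (G : ExtGame ι) → (∀ i, G.Strategy i) → ι → ℝ
  | .leaf o, _ => o
  | .node j _ children, σ =>
      outcome (children ((σ j).1 rfl)) (fun i => (σ i).2 ((σ j).1 rfl))

/-- Nodes of the game tree, identified by the path from the root. -/
inductive Node : ExtGame ι → Type where
  | root (G : ExtGame ι) : Node G
  | child {j : ι} {m : ℕ} {children : Fin (m + 1) → ExtGame ι}
      (c : Fin (m + 1)) : Node (children c) → Node (.node j m children)

/-- The subgame rooted at a node. -/
def subgameAt : {G : ExtGame ι} → Node G → ExtGame ι
  | _, .root G => G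
  | _, .child c v => subgameAt v

/-- The joint strategy of the subgame rooted at `v` induced by a joint strategy. -/
def restrictProfile : {G : ExtGame ι} → (∀ i, G.Strategy i) → (v : Node G) →
    ∀ i, (subgameAt v).Strategy i
  | _, σ, .root _ => σ
  | _, σ, .child c v => restrictProfile (fun i => (σ i).2 c) v

/-- Nash equilibrium of (the strategic form of) an extensive game. -/
def NashEq [DecidableEq ι] (G : ExtGame ι) (σ : ∀ i, G.Strategy i) : Prop :=
  ∀ (i : ι) (t : G.Strategy i), G.outcome σ i ≥ G.outcome (Function.update σ i t) i

/-- Subgame perfect equilibrium: the induced joint strategy is a Nash equilibrium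
in the subgame rooted at every node. -/
def SPE [DecidableEq ι] (G : ExtGame ι) (σ : ∀ i, G.Strategy i) : Prop :=
  ∀ v : Node G, (subgameAt v).NashEq (restrictProfile σ v)

/-- At the root (if it is a non-leaf), the player to move chooses a child whose
subgame outcome (under the induced strategies) is maximal for him. -/
def BestAtRoot : (G : ExtGame ι) → (∀ i, G.Strategy i) → Prop
  | .leaf _, _ => True
  | .node j _ children, σ =>
      ∀ c, outcome (children ((σ j).1 rfl)) (fun i => (σ i).2 ((σ j).1 rfl)) j ≥
        outcome (children c) (fun i => (σ i).2 c) j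

/-- The list of payoff vectors at the leaves of the game tree (one entry per leaf). -/
def leavesList : ExtGame ι → List (ι → ℝ)
  | .leaf o => [o]
  | .node _ _ children => (List.ofFn fun c => leavesList (children c)).flatten

/-- The game is without relevant ties: at every non-leaf node `u` with `turn(u) = i`,
the outcome function of player `i` is injective on the leaves of the subtree rooted at `u`. -/
def NoRelevantTies : ExtGame ι → Prop
  | .leaf _ => True
  | .node j m children =>
      ((ExtGame.node j m children).leavesList.Pairwise fun o o' => o j ≠ o' j) ∧
      ∀ c, NoRelevantTies (children c)

/-- The player to move at a node (`none` if the node is a leaf). -/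
def turnAt {G : ExtGame ι} (v : Node G) : Option ι :=
  match subgameAt v with
  | .leaf _ => none
  | .node j _ _ => some j

end ExtGame

namespace ExtGame

variable {ι : Type} [DecidableEq ι]

lemma profile_update {m : ℕ} {children : Fin (m+1) → ExtGame ι}
    {j0 : ι} (σ : ∀ i, (ExtGame.node j0 m children).Strategy i) (i : ι)
    (t : (ExtGame.node j0 m children).Strategy i) (c : Fin (m+1)) :
    (fun i' => ((Function.update σ i t) i').2 c)
      = Function.update (fun i' => (σ i').2 c) i (t.2 c) := by
  funext i'
  by_cases h : i' = i
  · subst h; simp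
  · simp [Function.update_of_ne h]

lemma best_of_nash (G : ExtGame ι) (σ : ∀ i, G.Strategy i) (h : G.NashEq σ) :
    G.BestAtRoot σ := by
  cases G with
  | leaf o => trivial
  | node j m children =>
    intro c
    set t : (ExtGame.node j m children).Strategy j := ⟨fun _ => c, (σ j).2⟩ with ht
    have key := h j t
    have hupd : Function.update σ j t j = t := Function.update_self ..
    have heq : outcome (ExtGame.node j m children) (Function.update σ j t) j
        = outcome (children c) (fun i => (σ i).2 c) j := by
      show outcome (children ((Function.update σ j t j).1 rfl))
          (fun i => ((Function.update σ j t) i).2 ((Function.update σ j t j).1 rfl)) j = _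
      rw [hupd]
      show outcome (children c) (fun i => ((Function.update σ j t) i).2 c) j = _
      rw [profile_update]
      congr 1
      funext i'
      by_cases h' : i' = j
      · subst h'; simp [ht]
      · simp [Function.update_of_ne h']
    calc outcome (children ((σ j).1 rfl)) (fun i => (σ i).2 ((σ j).1 rfl)) j
        = outcome (ExtGame.node j m children) σ j := rfl
      _ ≥ outcome (ExtGame.node j m children) (Function.update σ j t) j := key
      _ = outcome (children c) (fun i => (σ i).2 c) j := heq

lemma nash_of_best : ∀ (G : ExtGame ι) (σ : ∀ i, G.Strategy i),
    (∀ v : Node G, (subgameAt v).BestAtRoot (restrictProfile σ v)) → G.NashEq σ := by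
  intro G
  induction G with
  | leaf o =>
    intro σ _ i t
    exact le_refl _
  | node j m children ih =>
    intro σ h i t
    have hroot : ∀ c, outcome (children ((σ j).1 rfl)) (fun i' => (σ i').2 ((σ j).1 rfl)) j ≥
        outcome (children c) (fun i' => (σ i').2 c) j := h (.root _)
    by_cases hij : i = j
    · subst hij
      have hupd : Function.update σ i t i = t := Function.update_self ..
      have heq : outcome (ExtGame.node i m children) (Function.update σ i t) i
          = outcome (children (t.1 rfl))
              (Function.update (fun i' => (σ i').2 (t.1 rfl)) i (t.2 (t.1 rfl))) i := by
        show outcome (children ((Function.update σ i t i).1 rfl))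
            (fun i' => ((Function.update σ i t) i').2 ((Function.update σ i t i).1 rfl)) i = _
        rw [hupd, profile_update]
      rw [show outcome (ExtGame.node i m children) σ i
            = outcome (children ((σ i).1 rfl)) (fun i' => (σ i').2 ((σ i).1 rfl)) i from rfl,
          heq]
      have h1 := ih (t.1 rfl) (fun i' => (σ i').2 (t.1 rfl))
        (fun w => h (.child (t.1 rfl) w)) i (t.2 (t.1 rfl))
      exact le_trans h1 (hroot (t.1 rfl))
    · have hupd : Function.update σ i t j = σ j := Function.update_of_ne (Ne.symm hij) ..
      have heq : outcome (ExtGame.node j m children) (Function.update σ i t) i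
          = outcome (children ((σ j).1 rfl))
              (Function.update (fun i' => (σ i').2 ((σ j).1 rfl)) i (t.2 ((σ j).1 rfl))) i := by
        show outcome (children ((Function.update σ i t j).1 rfl))
            (fun i' => ((Function.update σ i t) i').2 ((Function.update σ i t j).1 rfl)) i = _
        rw [hupd, profile_update]
      rw [show outcome (ExtGame.node j m children) σ i
            = outcome (children ((σ j).1 rfl)) (fun i' => (σ i').2 ((σ j).1 rfl)) i from rfl,
          heq]
      exact ih ((σ j).1 rfl) (fun i' => (σ i').2 ((σ j).1 rfl))
        (fun w => h (.child ((σ j).1 rfl) w)) i (t.2 ((σ j).1 rfl))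

lemma spe_of_best : ∀ (G : ExtGame ι) (σ : ∀ i, G.Strategy i),
    (∀ v : Node G, (subgameAt v).BestAtRoot (restrictProfile σ v)) → G.SPE σ := by
  intro G
  induction G with
  | leaf o =>
    intro σ h v
    cases v with
    | root => intro i t; exact le_refl _
  | node j m children ih =>
    intro σ h v
    cases v with
    | root => exact nash_of_best _ σ h
    | child c w => exact ih c (fun i => (σ i).2 c) (fun w' => h (.child c w')) w

end ExtGame



/-- (One deviation property) A joint strategy `σ` of a finite extensive game with perfect
information is a subgame perfect equilibrium iff at every non-leaf node `u` of the game tree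
(with `i = turn(u)`), `σ_i(u)` selects a child `x` of `u` for which `o_i(leaf(σ^x))` is
maximal. -/
theorem one_deviation_property {n : ℕ} (G : ExtGame (Fin n)) (σ : ∀ i, G.Strategy i) :
    G.SPE σ ↔
      ∀ v : ExtGame.Node G,
        (ExtGame.subgameAt v).BestAtRoot (ExtGame.restrictProfile σ v) := by
  constructor
  · intro h v
    exact ExtGame.best_of_nash _ _ (h v)
  · intro h
    exact ExtGame.spe_of_best G σ h
end

section
/- Let G be a finite extensive game with perfect information over the game tree T with root v. A joint strategy s is a subgame perfect equilibrium in G if and only if both: (1) s_i(v) ∈ argmax_{x ∈ C(v)} o_i(leaf(s^x)), where i = turn(v); and (2) for every child u ∈ C(v), the induced joint strategy s^u is a subgame perfect equilibrium of the subgame G^u. -/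
namespace ExtGame

variable {ι : Type} [DecidableEq ι] {j : ι} {m : ℕ} {children : Fin (m + 1) → ExtGame ι}

lemma restrict_update (σ : ∀ i, (node j m children).Strategy i) (i : ι)
    (t : (node j m children).Strategy i) (c : Fin (m + 1)) :
    (fun k => (Function.update σ i t k).2 c) =
      Function.update (fun k => (σ k).2 c) i (t.2 c) := by
  funext k
  rcases eq_or_ne k i with rfl | hki
  · simp
  · simp [Function.update_of_ne hki]

/-- The move at the root is passed as `s` so that callers can substitute it without
rewriting under the dependent projection `(· j).1 rfl`. -/
lemma outcome_update (σ : ∀ i, (node j m children).Strategy i) (i : ι)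
    (t : (node j m children).Strategy i) (s : (node j m children).Strategy j)
    (hs : Function.update σ i t j = s) :
    (node j m children).outcome (Function.update σ i t) =
      (children (s.1 rfl)).outcome
        (Function.update (fun k => (σ k).2 (s.1 rfl)) i (t.2 (s.1 rfl))) := by
  subst hs
  rw [outcome, restrict_update]

lemma NashEq.bestAtRoot {σ : ∀ i, (node j m children).Strategy i}
    (h : (node j m children).NashEq σ) : (node j m children).BestAtRoot σ := by
  intro c
  let t : (node j m children).Strategy j := (fun _ => c, (σ j).2)
  have hdev := h j t
  rwa [outcome_update σ j t t (Function.update_self ..), Function.update_eq_self] at hdev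

lemma nashEq_node_of_bestAtRoot {σ : ∀ i, (node j m children).Strategy i}
    (hbest : (node j m children).BestAtRoot σ)
    (hchildren : ∀ c, (children c).NashEq (fun i => (σ i).2 c)) :
    (node j m children).NashEq σ := by
  intro i t
  rcases eq_or_ne i j with rfl | hij
  · rw [outcome_update σ i t t (Function.update_self ..)]
    exact (hchildren _ i _).trans (hbest _)
  · rw [outcome_update σ i t (σ j) (Function.update_of_ne hij.symm ..)]
    exact hchildren _ i _

lemma SPE.nashEq {G : ExtGame ι} {σ : ∀ i, G.Strategy i} (h : G.SPE σ) : G.NashEq σ :=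
  h (.root G)

lemma SPE.child {σ : ∀ i, (node j m children).Strategy i} (h : (node j m children).SPE σ)
    (c : Fin (m + 1)) : (children c).SPE (fun i => (σ i).2 c) :=
  fun v => h (.child c v)

end ExtGame

/-- A joint strategy `σ` of a finite extensive game (whose root is a non-leaf node with
player `j` to move and children `children c`) is a subgame perfect equilibrium iff
(1) at the root, `σ_j` selects a child whose subgame outcome is maximal for `j`, and
(2) for every child `c` of the root, the induced joint strategy is a subgame perfect
equilibrium of the subgame rooted at `c`. -/
theorem spe_iff_bestAtRoot_and_spe_children {n : ℕ} (j : Fin n) (m : ℕ)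
    (children : Fin (m + 1) → ExtGame (Fin n))
    (σ : ∀ i, (ExtGame.node j m children).Strategy i) :
    (ExtGame.node j m children).SPE σ ↔
      (ExtGame.node j m children).BestAtRoot σ ∧
      ∀ c : Fin (m + 1), (children c).SPE (fun i => (σ i).2 c) := by
  refine ⟨fun h => ⟨h.nashEq.bestAtRoot, h.child⟩, fun ⟨hbest, hchildren⟩ v => ?_⟩
  cases v with
  | root => exact ExtGame.nashEq_node_of_bestAtRoot hbest fun c => (hchildren c).nashEq
  | child c v => exact hchildren c v
end

section
/- In every finite extensive game with perfect information whose strategic form satisfies the TDI condition, all subgame perfect equilibria are payoff equivalent, i.e., any two subgame perfect equilibria s and t satisfy o(leaf(s)) = o(leaf(t)). -/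
/-- The strategic form of `G` satisfies the transference of decisionmaker indifference (TDI)
condition: whenever two strategies of a player `i` yield him the same payoff against some
joint strategy of the other players, they yield the same payoff to all players. -/
def TDI {n : ℕ} (G : ExtGame (Fin n)) : Prop :=
  ∀ (i : Fin n) (r t : G.Strategy i) (σ : ∀ j, G.Strategy j),
    G.outcome (Function.update σ i r) i = G.outcome (Function.update σ i t) i →
    ∀ j : Fin n, G.outcome (Function.update σ i r) j = G.outcome (Function.update σ i t) j

/-!
Backward induction. Subgame perfection and TDI both pass to the subgames at the root's
children (TDI because a profile of a subgame extends to a profile of the whole game that moves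
into it), so by induction the two equilibria give the same outcome in every such subgame. The
mover `j` at the root therefore gets the same payoff under `σ` and `τ`: each equilibrium's root
move is a best reply among the same continuation payoffs. Redirecting `σ`'s root move to `τ`'s
leaves `j` indifferent, so by TDI it leaves every player indifferent, and the redirected profile
yields the outcome of `τ`.
-/

namespace ExtGame

variable {ι : Type} {j : ι} {m : ℕ} {children : Fin (m + 1) → ExtGame ι}

def defaultStrategy (i : ι) : (G : ExtGame ι) → G.Strategy i
  | .leaf _ => ⟨⟩
  | .node _ _ children => ⟨fun _ => 0, fun c => defaultStrategy i (children c)⟩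

def extendStrategy {i : ι} (c : Fin (m + 1)) (s : (children c).Strategy i) :
    (node j m children).Strategy i :=
  ⟨fun _ => c, Function.update (fun c' => defaultStrategy i (children c')) c s⟩

def withRootMove (s : (node j m children).Strategy j) (d : Fin (m + 1)) :
    (node j m children).Strategy j :=
  ⟨fun _ => d, s.2⟩

def childProfile (σ : ∀ i, (node j m children).Strategy i) (c : Fin (m + 1)) :
    ∀ i, (children c).Strategy i :=
  fun i => (σ i).2 c

theorem outcome_node_of_move {σ : ∀ i, (node j m children).Strategy i} {c : Fin (m + 1)}
    (hc : (σ j).1 rfl = c) :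
    (node j m children).outcome σ = (children c).outcome (childProfile σ c) := by
  subst hc; rfl

theorem outcome_extendStrategy (c : Fin (m + 1)) (π : ∀ i, (children c).Strategy i) :
    (node j m children).outcome (fun i => extendStrategy c (π i)) = (children c).outcome π := by
  simp [outcome, extendStrategy]

variable [DecidableEq ι]

theorem update_extendStrategy (c : Fin (m + 1)) (σ : ∀ i, (children c).Strategy i) (i : ι)
    (s : (children c).Strategy i) :
    Function.update (fun k => extendStrategy (j := j) c (σ k)) i (extendStrategy c s) =
      fun k => extendStrategy c (Function.update σ i s k) :=
  funext fun k => (Function.apply_update (fun _ => extendStrategy c) σ i s k).symm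

theorem outcome_update_withRootMove (σ : ∀ i, (node j m children).Strategy i)
    (d : Fin (m + 1)) :
    (node j m children).outcome (Function.update σ j (withRootMove (σ j) d)) =
      (children d).outcome (childProfile σ d) := by
  have hmove : (Function.update σ j (withRootMove (σ j) d) j).1 rfl = d := by
    rw [Function.update_self]; rfl
  have hprof : childProfile (Function.update σ j (withRootMove (σ j) d)) d = childProfile σ d := by
    funext i
    rw [childProfile, Function.apply_update (fun i (s : (node j m children).Strategy i) => s.2 d)]
    exact congrFun (Function.update_eq_self j _) i
  rw [outcome_node_of_move hmove, hprof]

theorem SPE.childProfile {σ : ∀ i, (node j m children).Strategy i} (hσ : SPE _ σ)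
    (c : Fin (m + 1)) : SPE _ (childProfile σ c) :=
  fun v => hσ (.child c v)

theorem NashEq.outcome_child_le {σ : ∀ i, (node j m children).Strategy i} (hσ : NashEq _ σ)
    (d : Fin (m + 1)) :
    (children d).outcome (childProfile σ d) j ≤ (node j m children).outcome σ j := by
  simpa only [outcome_update_withRootMove] using hσ j (withRootMove (σ j) d)

theorem outcome_le_of_nashEq {σ τ : ∀ i, (node j m children).Strategy i} (hτ : NashEq _ τ)
    (hc : ∀ c, (children c).outcome (childProfile σ c) j ≤
      (children c).outcome (childProfile τ c) j) :
    (node j m children).outcome σ j ≤ (node j m children).outcome τ j :=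
  calc (node j m children).outcome σ j
      = (children _).outcome (childProfile σ ((σ j).1 rfl)) j := rfl
    _ ≤ (children _).outcome (childProfile τ ((σ j).1 rfl)) j := hc _
    _ ≤ (node j m children).outcome τ j := hτ.outcome_child_le _

end ExtGame

section TDI

open ExtGame

variable {n : ℕ} {j : Fin n} {m : ℕ} {children : Fin (m + 1) → ExtGame (Fin n)}

theorem TDI.child (h : TDI (.node j m children)) (c : Fin (m + 1)) : TDI (children c) := by
  intro i r t σ hi p
  have lift : ∀ s, (node j m children).outcome
      (Function.update (fun k => extendStrategy c (σ k)) i (extendStrategy c s)) =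
        (children c).outcome (Function.update σ i s) := fun s => by
    rw [update_extendStrategy, outcome_extendStrategy]
  simpa only [lift] using h i (extendStrategy c r) (extendStrategy c t)
    (fun k => extendStrategy c (σ k)) (by simpa only [lift] using hi) p

theorem TDI.outcome_eq_of_nashEq (h : TDI (.node j m children))
    {σ τ : ∀ i, (node j m children).Strategy i} (hσ : NashEq _ σ) (hτ : NashEq _ τ)
    (hc : ∀ c, (children c).outcome (childProfile σ c) = (children c).outcome (childProfile τ c)) :
    (node j m children).outcome σ = (node j m children).outcome τ := by
  have hredirect : (node j m children).outcome
      (Function.update σ j (withRootMove (σ j) ((τ j).1 rfl))) = (node j m children).outcome τ := by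
    rw [outcome_update_withRootMove, hc]; rfl
  have hmover : (node j m children).outcome σ j = (node j m children).outcome τ j :=
    le_antisymm (outcome_le_of_nashEq hτ fun c => (congrFun (hc c) j).le)
      (outcome_le_of_nashEq hσ fun c => (congrFun (hc c) j).ge)
  funext k
  have := h j (σ j) (withRootMove (σ j) ((τ j).1 rfl)) σ
    (by rw [Function.update_eq_self, hredirect, hmover]) k
  rwa [Function.update_eq_self, hredirect] at this

end TDI

/-- In every finite extensive game with perfect information whose strategic form satisfies
the TDI condition, all subgame perfect equilibria are payoff equivalent. -/
theorem spe_payoff_equivalent_of_TDI {n : ℕ} (G : ExtGame (Fin n)) (h : TDI G) :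
    ∀ σ τ : ∀ i, G.Strategy i, G.SPE σ → G.SPE τ →
      ∀ j : Fin n, G.outcome σ j = G.outcome τ j := by
  induction G with
  | leaf _ => intro _ _ _ _ _; rfl
  | node j m children ih =>
    intro σ τ hσ hτ
    refine congrFun (h.outcome_eq_of_nashEq (hσ (.root _)) (hτ (.root _)) fun c => ?_)
    exact funext (ih c (h.child c) _ _ (hσ.childProfile c) (hτ.childProfile c))
end

section
/- (Zermelo-type theorem) Let G be a finite win or lose extensive game with perfect information for two players. For each player i ∈ {1,2}: player i has a winning strategy if and only if player -i has no winning strategy; i.e., win_i(G) ≠ ∅ iff win_{-i}(G) = ∅. -/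
/-- A two-player extensive game (players indexed by `Bool`, the opponent of `i` being `!i`)
is a win or lose game: the only possible outcomes are `(1, -1)` and `(-1, 1)`. -/
def WinOrLose (G : ExtGame Bool) : Prop :=
  ∀ o ∈ G.leavesList, (o false = 1 ∧ o true = -1) ∨ (o false = -1 ∧ o true = 1)

/-- `si` is a winning strategy for player `i`: whatever the opponent plays, the outcome
for `i` is `1`. -/
def Winning (G : ExtGame Bool) (i : Bool) (si : G.Strategy i) : Prop :=
  ∀ σ : ∀ j, G.Strategy j, σ i = si → G.outcome σ i = 1


/-!
Backward induction (Zermelo). At a leaf one of the players gets `1` and wins. At a node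
where `j` moves, either `j` wins one of the subgames and then wins by moving there, or by
induction the opponent wins every subgame and then wins whatever `j` chooses. Conversely,
two winning strategies played against each other would give both players `1`, which no
leaf of a win or lose game does.
-/

namespace ExtGame

variable {ι : Type}

instance instInhabitedStrategy (i : ι) : (G : ExtGame ι) → Inhabited (G.Strategy i)
  | .leaf _ => ⟨PUnit.unit⟩
  | .node _ _ children =>
      ⟨(fun _ => 0, fun c => (instInhabitedStrategy i (children c)).default)⟩

theorem mem_leavesList_node {j : ι} {m : ℕ} {children : Fin (m + 1) → ExtGame ι}
    (c : Fin (m + 1)) {o : ι → ℝ} (ho : o ∈ (children c).leavesList) :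
    o ∈ (node j m children).leavesList := by
  simp only [leavesList, List.mem_flatten, List.mem_ofFn]
  exact ⟨_, ⟨c, rfl⟩, ho⟩

theorem outcome_node {j : ι} {m : ℕ} {children : Fin (m + 1) → ExtGame ι}
    (σ : ∀ i, (node j m children).Strategy i) :
    (node j m children).outcome σ =
      (children ((σ j).1 rfl)).outcome fun i => (σ i).2 ((σ j).1 rfl) :=
  rfl

theorem outcome_mem_leavesList : (G : ExtGame ι) → (σ : ∀ i, G.Strategy i) →
    G.outcome σ ∈ G.leavesList
  | .leaf _, _ => List.mem_singleton_self _
  | .node _ _ _, σ => mem_leavesList_node _ (outcome_mem_leavesList _ _)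

end ExtGame

open ExtGame

namespace WinOrLose

variable {G : ExtGame Bool}

theorem child {j : Bool} {m : ℕ} {children : Fin (m + 1) → ExtGame Bool}
    (h : WinOrLose (.node j m children)) (c : Fin (m + 1)) : WinOrLose (children c) :=
  fun o ho => h o (mem_leavesList_node c ho)

theorem apply_not_eq_neg (h : WinOrLose G) {o : Bool → ℝ} (ho : o ∈ G.leavesList) (i : Bool) :
    o (!i) = -o i := by
  rcases h o ho with ⟨h₀, h₁⟩ | ⟨h₀, h₁⟩ <;> cases i <;> simp [h₀, h₁]

theorem exists_apply_eq_one (h : WinOrLose G) {o : Bool → ℝ} (ho : o ∈ G.leavesList) :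
    ∃ w, o w = 1 := by
  rcases h o ho with ⟨h₀, -⟩ | ⟨-, h₁⟩
  exacts [⟨false, h₀⟩, ⟨true, h₁⟩]

end WinOrLose

theorem exists_profile {G : ExtGame Bool} {i : Bool} (si : G.Strategy i)
    (s' : G.Strategy (!i)) : ∃ σ : ∀ j, G.Strategy j, σ i = si ∧ σ (!i) = s' := by
  cases i
  exacts [⟨fun j => Bool.rec si s' j, rfl, rfl⟩, ⟨fun j => Bool.rec s' si j, rfl, rfl⟩]

theorem not_winning_of_winning {G : ExtGame Bool} (h : WinOrLose G) {i : Bool}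
    {si : G.Strategy i} (hi : Winning G i si) (s' : G.Strategy (!i)) :
    ¬ Winning G (!i) s' := by
  intro h'
  obtain ⟨σ, hσi, hσi'⟩ := exists_profile si s'
  have h_neg := h.apply_not_eq_neg (outcome_mem_leavesList G σ) i
  rw [hi σ hσi, h' σ hσi'] at h_neg
  norm_num at h_neg

theorem winning_leaf {o : Bool → ℝ} {w : Bool} (hw : o w = 1) :
    Winning (.leaf o) w PUnit.unit :=
  fun _ _ => hw

theorem winning_node_of_winning_child {j : Bool} {m : ℕ}
    {children : Fin (m + 1) → ExtGame Bool} {c : Fin (m + 1)} {s : (children c).Strategy j}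
    (hs : Winning (children c) j s) :
    Winning (.node j m children) j (fun _ => c, Function.update (fun _ => default) c s) := by
  intro σ hσ
  rw [outcome_node, hσ]
  exact hs _ (by rw [hσ]; simp)

theorem winning_node_of_forall_winning {j i : Bool} {m : ℕ}
    {children : Fin (m + 1) → ExtGame Bool} {s : ∀ c, (children c).Strategy i}
    (hs : ∀ c, Winning (children c) i (s c)) :
    Winning (.node j m children) i (fun _ => 0, s) := by
  intro σ hσ
  exact hs _ _ (by rw [hσ])

theorem exists_winning : (G : ExtGame Bool) → WinOrLose G →
    ∃ w, ∃ s : G.Strategy w, Winning G w s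
  | .leaf o, h => by
    obtain ⟨w, hw⟩ := h.exists_apply_eq_one (List.mem_singleton_self o)
    exact ⟨w, _, winning_leaf hw⟩
  | .node j m children, h => by
    by_cases hj : ∃ c, ∃ s : (children c).Strategy j, Winning (children c) j s
    · obtain ⟨c, s, hs⟩ := hj
      exact ⟨j, _, winning_node_of_winning_child hs⟩
    · push Not at hj
      have h_opp : ∀ c, ∃ s : (children c).Strategy (!j), Winning (children c) (!j) s := by
        intro c
        obtain ⟨w, s, hs⟩ := exists_winning (children c) (h.child c)
        rcases Bool.eq_or_eq_not w j with rfl | rfl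
        · exact absurd hs (hj c s)
        · exact ⟨s, hs⟩
      choose s hs using h_opp
      exact ⟨!j, _, winning_node_of_forall_winning hs⟩

/-- (Zermelo-type theorem) In a finite win or lose extensive game with perfect information,
for each player `i`: player `i` has a winning strategy iff his opponent has none. -/
theorem win_iff_opponent_no_win (G : ExtGame Bool) (h : WinOrLose G) (i : Bool) :
    (∃ si : G.Strategy i, Winning G i si) ↔ ¬ ∃ s' : G.Strategy (!i), Winning G (!i) s' := by
  refine ⟨fun ⟨si, hsi⟩ ⟨s', hs'⟩ => not_winning_of_winning h hsi s' hs', fun h_opp => ?_⟩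
  obtain ⟨w, s, hs⟩ := exists_winning G h
  rcases Bool.eq_or_eq_not w i with rfl | rfl
  · exact ⟨s, hs⟩
  · exact absurd ⟨s, hs⟩ h_opp
end
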